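/- Let V = {V(·|·,s)}_{s∈S} and V* = {V*(·|·,s*)}_{s*∈S*} be two AVCs from a finite input alphabet X to a finite output alphabet Z with finite state sets S and S*, and suppose D(V,V*) ≤ ε for some ε ∈ (0,1). Let n ∈ ℕ, let J be a finite message set with uniform distribution, and let E(xⁿ|j) be a stochastic encoder; for a state sequence sⁿ let P_{sⁿ}(j,zⁿ) = (1/|J|)·∑_{xⁿ} ∏_{i=1}^n V(z_i|x_i,s_i) · E(xⁿ|j), and analogously P*_{s*ⁿ} for V*. If max_{sⁿ∈Sⁿ} (1/n)·I(J;Zⁿ‖P_{sⁿ}) = δ_n, then max_{s*ⁿ∈S*ⁿ} (1/n)·I(J;Zⁿ‖P*_{s*ⁿ}) ≤ δ_n + 4ε·log|Z| + 4H₂(ε). -/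

import Mathlib

open Real Finset

/-- Binary entropy function (base 2). -/
noncomputable def H2 (ε : ℝ) : ℝ :=
  -(ε * Real.logb 2 ε) - (1 - ε) * Real.logb 2 (1 - ε)

/-- `p` is a probability distribution on the finite alphabet `α`. -/
def IsProb {α : Type*} [Fintype α] (p : α → ℝ) : Prop :=
  (∀ a, 0 ≤ p a) ∧ ∑ a, p a = 1

/-- `W` is a channel (stochastic matrix) from `X` to `Y`. -/
def IsChannel {X Y : Type*} [Fintype Y] (W : X → Y → ℝ) : Prop :=
  ∀ x, (∀ y, 0 ≤ W x y) ∧ ∑ y, W x y = 1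

/-- Conditional entropy `H(Y|X‖P)` (base 2) of a joint distribution `P` on `X × Y`. -/
noncomputable def condEnt {X Y : Type*} [Fintype X] [Fintype Y] (P : X × Y → ℝ) : ℝ :=
  -∑ x : X, ∑ y : Y, P (x, y) * Real.logb 2 (P (x, y) / ∑ y' : Y, P (x, y'))

/-- Mutual information `I(U;Y‖P)` (base 2) of a joint distribution `P` on `U × Y`. -/
noncomputable def mutInf {U Y : Type*} [Fintype U] [Fintype Y] (P : U × Y → ℝ) : ℝ :=
  ∑ u : U, ∑ y : Y,
    P (u, y) * Real.logb 2 (P (u, y) / ((∑ y' : Y, P (u, y')) * ∑ u' : U, P (u', y)))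

/-- Channel distance `d(W,W') = max_x ∑_y |W(y|x) − W'(y|x)|`. -/
noncomputable def dChan {X Y : Type*} [Fintype Y] (W W' : X → Y → ℝ) : ℝ :=
  ⨆ x : X, ∑ y : Y, |W x y - W' x y|

/-- Distance `D(W₁,W₂)` between two AVCs (families of channels). -/
noncomputable def Davc {X Y : Type*} [Fintype Y] {S₁ S₂ : Type*}
    (W₁ : S₁ → X → Y → ℝ) (W₂ : S₂ → X → Y → ℝ) : ℝ :=
  max (⨆ s₂ : S₂, ⨅ s₁ : S₁, dChan (W₁ s₁) (W₂ s₂))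
      (⨆ s₁ : S₁, ⨅ s₂ : S₂, dChan (W₁ s₁) (W₂ s₂))

/-- The symmetrizability gap function
`F(σ,σ',W) = ∑_{x₁,x₂,y} |∑_s W(y|x₁,s)σ(s|x₂) − ∑_s W(y|x₂,s)σ'(s|x₁)|`. -/
noncomputable def Fsym {X Y S : Type*} [Fintype X] [Fintype Y] [Fintype S]
    (σ σ' : X → S → ℝ) (W : S → X → Y → ℝ) : ℝ :=
  ∑ x₁ : X, ∑ x₂ : X, ∑ y : Y,
    |(∑ s : S, W s x₁ y * σ x₂ s) - ∑ s : S, W s x₂ y * σ' x₁ s|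

/-- Joint distribution of a uniformly distributed message `J` and the eavesdropper output
`Zⁿ` for state sequence `sⁿ`, under the stochastic encoder `E`. -/
noncomputable def jointAVC {X Z S J : Type*} [Fintype X] [Fintype J] (n : ℕ)
    (V : S → X → Z → ℝ) (sn : Fin n → S) (E : J → (Fin n → X) → ℝ) :
    J × (Fin n → Z) → ℝ :=
  fun p => ((Fintype.card J : ℝ))⁻¹ *
    ∑ xn : Fin n → X, (∏ i : Fin n, V (sn i) (xn i) (p.2 i)) * E p.1 xn

/-!
Hybrid argument. For each state `s'` of `V'` pick a state `f s'` of `V` whose channel is `ε`-close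
in row-wise ℓ¹ distance, and compare the leakage under `s'ⁿ` with that under `f ∘ s'ⁿ`. Since
`I(J;Zⁿ) = H(J) + H(Zⁿ) - H(J,Zⁿ)` and `H(J)` does not depend on the channels, it suffices to
bound the change of `H(T,Zⁿ)` (for `T = J` and for a trivial `T`) when the channels are replaced
one letter at a time. Replacing the channel of letter `k` only changes the law of `Z_k` given
`(T, Z_{≠k})`: a mixture of output distributions each moving by at most `ε` in ℓ¹. Continuity of
entropy, `|H(p) - H(q)| ≤ 2 (ε log |Z| + h(ε))` when `‖p - q‖₁ ≤ ε` (from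
`|η a - η b| ≤ η |a - b| + |a - b|` for `η = negMulLog` and Jensen), bounds the cost of each
replacement; `n` replacements in two entropies give `n (4 ε log |Z| + 4 h(ε))`.
-/

namespace Real

lemma negMulLog_sub_negMulLog_le {s t : ℝ} (hs : 0 ≤ s) (hst : s ≤ t) :
    negMulLog s - negMulLog t ≤ (t - s) * (log t + 1) := by
  rcases hs.eq_or_lt with rfl | hs
  · simp only [negMulLog]
    nlinarith
  have ht : 0 < t := hs.trans_le hst
  have hlog : s * log (t / s) ≤ t - s := by
    calc s * log (t / s) ≤ s * (t / s - 1) := by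
          gcongr; exact log_le_sub_one_of_pos (by positivity)
      _ = t - s := by field_simp
  rw [log_div ht.ne' hs.ne'] at hlog
  simp only [negMulLog]
  nlinarith

lemma negMulLog_add_le {a b : ℝ} (ha : 0 ≤ a) (hb : 0 ≤ b) :
    negMulLog (a + b) ≤ negMulLog a + negMulLog b := by
  have hmono : ∀ {x y : ℝ}, 0 ≤ x → 0 ≤ y → x * log x ≤ x * log (x + y) := by
    intro x y hx hy
    rcases hx.eq_or_lt with rfl | hx
    · simp
    · gcongr; linarith
  have h1 := hmono ha hb
  have h2 := hmono hb ha
  rw [add_comm b] at h2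
  simp only [negMulLog]
  linarith

lemma abs_negMulLog_sub_le {a b : ℝ} (ha : 0 ≤ a) (hb : 0 ≤ b) (ha1 : a ≤ 1) (hb1 : b ≤ 1) :
    |negMulLog a - negMulLog b| ≤ negMulLog |a - b| + |a - b| := by
  wlog hab : a ≤ b generalizing a b
  · rw [abs_sub_comm, abs_sub_comm a]
    exact this hb ha hb1 ha1 (le_of_not_ge hab)
  rw [abs_sub_comm a, abs_of_nonneg (sub_nonneg.2 hab)]
  have hsub := negMulLog_add_le ha (sub_nonneg.2 hab)
  rw [add_sub_cancel] at hsub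
  have htangent := negMulLog_sub_negMulLog_le ha hab
  have hlogb : log b ≤ 0 := log_nonpos hb hb1
  have hnn := negMulLog_nonneg (sub_nonneg.2 hab) (by linarith)
  rw [abs_le]
  constructor <;> nlinarith

lemma sum_negMulLog_le {α : Type*} [Fintype α] (γ : α → ℝ) (hγ : ∀ a, 0 ≤ γ a) :
    ∑ a, negMulLog (γ a) ≤ (∑ a, γ a) * log (Fintype.card α) + negMulLog (∑ a, γ a) := by
  rcases isEmpty_or_nonempty α with hα | hα
  · simp
  set c : ℝ := (Fintype.card α : ℝ)
  have hc : 0 < c := by positivity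
  have jensen := concaveOn_negMulLog.le_map_sum (t := Finset.univ) (w := fun _ => c⁻¹) (p := γ)
    (fun _ _ => by positivity) (by simp [c]) (fun a _ => hγ a)
  simp only [smul_eq_mul, ← Finset.mul_sum] at jensen
  rw [negMulLog_mul, negMulLog, log_inv] at jensen
  have : c⁻¹ * ∑ a, negMulLog (γ a) ≤ c⁻¹ * ((∑ a, γ a) * log c + negMulLog (∑ a, γ a)) := by
    linarith
  exact le_of_mul_le_mul_left this (by positivity)

lemma add_negMulLog_le_add_negMulLog {L s t : ℝ} (hL : log 2 ≤ L) (hs : 0 ≤ s) (hst : s ≤ t)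
    (ht : t ≤ 1 / 2) : s * L + negMulLog s ≤ t * L + negMulLog t := by
  rcases hst.eq_or_lt with rfl | hst
  · rfl
  have hlogt : log t ≤ -log 2 := by
    rw [← log_inv, ← one_div]
    exact log_le_log (by linarith) ht
  have hslope : log t + 1 ≤ L := by linarith [log_two_gt_d9]
  have := negMulLog_sub_negMulLog_le hs hst.le
  nlinarith

lemma mul_log_two_le_negMulLog {ε : ℝ} (h0 : 0 ≤ ε) (h1 : ε ≤ 1 / 2) :
    ε * log 2 ≤ negMulLog ε := by
  rcases h0.eq_or_lt with rfl | h0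
  · simp
  have : log ε ≤ -log 2 := by
    rw [← log_inv, ← one_div]
    exact log_le_log h0 h1
  simp only [negMulLog]
  nlinarith

end Real

lemma IsProb.le_one {α : Type*} [Fintype α] {p : α → ℝ} (hp : IsProb p) (a : α) : p a ≤ 1 :=
  hp.2 ▸ single_le_sum (fun b _ => hp.1 b) (mem_univ a)

noncomputable def entropy {α : Type*} [Fintype α] (p : α → ℝ) : ℝ := ∑ a, negMulLog (p a)

section entropy

variable {α : Type*} [Fintype α]

lemma entropy_comp_equiv {β : Type*} [Fintype β] (e : β ≃ α) (p : α → ℝ) :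
    entropy (p ∘ e) = entropy p :=
  e.sum_comp fun a => negMulLog (p a)

lemma entropy_nonneg {p : α → ℝ} (hp : IsProb p) : 0 ≤ entropy p :=
  sum_nonneg fun a _ => negMulLog_nonneg (hp.1 a) (hp.le_one a)

lemma entropy_le_log_card {p : α → ℝ} (hp : IsProb p) : entropy p ≤ log (Fintype.card α) := by
  simpa [entropy, hp.2] using sum_negMulLog_le p hp.1

lemma entropy_const_mul {p : α → ℝ} (hp : ∑ a, p a = 1) (m : ℝ) :
    entropy (fun a => m * p a) = m * entropy p + negMulLog m := by
  simp only [entropy, negMulLog_mul, sum_add_distrib, ← sum_mul, ← mul_sum, hp]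
  ring

lemma abs_entropy_sub_le_of_le_half {p q : α → ℝ} (hp : IsProb p) (hq : IsProb q) {ε : ℝ}
    (hpq : ∑ a, |p a - q a| ≤ ε) (hε : ε ≤ 1 / 2) (hα : log 2 ≤ log (Fintype.card α)) :
    |entropy p - entropy q| ≤ ε * log (Fintype.card α) + negMulLog ε + ε := by
  have hdist : 0 ≤ ∑ a, |p a - q a| := sum_nonneg fun a _ => abs_nonneg _
  have hmono := add_negMulLog_le_add_negMulLog hα hdist hpq hε
  calc |entropy p - entropy q| = |∑ a, (negMulLog (p a) - negMulLog (q a))| := by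
        rw [entropy, entropy, sum_sub_distrib]
    _ ≤ ∑ a, |negMulLog (p a) - negMulLog (q a)| := abs_sum_le_sum_abs _ _
    _ ≤ ∑ a, (negMulLog |p a - q a| + |p a - q a|) := sum_le_sum fun a _ =>
        abs_negMulLog_sub_le (hp.1 a) (hq.1 a) (hp.le_one a) (hq.le_one a)
    _ ≤ (∑ a, |p a - q a|) * log (Fintype.card α) + negMulLog (∑ a, |p a - q a|)
          + ∑ a, |p a - q a| := by
        rw [sum_add_distrib]
        gcongr
        exact sum_negMulLog_le _ fun a => abs_nonneg _
    _ ≤ ε * log (Fintype.card α) + negMulLog ε + ε := by linarith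

lemma abs_entropy_sub_le {p q : α → ℝ} (hp : IsProb p) (hq : IsProb q) {ε : ℝ}
    (hpq : ∑ a, |p a - q a| ≤ ε) (hε : ε ≤ 1) :
    |entropy p - entropy q| ≤ 2 * (ε * log (Fintype.card α) + binEntropy ε) := by
  have hε0 : 0 ≤ ε := (sum_nonneg fun a _ => abs_nonneg _).trans hpq
  have hlog := log_natCast_nonneg (Fintype.card α)
  rw [binEntropy_eq_negMulLog_add_negMulLog_one_sub]
  have hneg := negMulLog_nonneg (sub_nonneg.2 hε) (by linarith)
  by_cases hsmall : ε ≤ 1 / 2 ∧ 2 ≤ Fintype.card α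
  · have hα : log 2 ≤ log (Fintype.card α) :=
      log_le_log two_pos (by exact_mod_cast hsmall.2)
    have hclose := abs_entropy_sub_le_of_le_half hp hq hpq hsmall.1 hα
    have hε_log : ε * log 2 ≤ ε * log (Fintype.card α) := by gcongr
    have hε_neg := mul_log_two_le_negMulLog hε0 hsmall.1
    nlinarith [log_two_gt_d9]
  -- otherwise `card α ≤ 1` or `ε > 1/2`, and `0 ≤ entropy ≤ log (card α)` suffices
  have hcrude : log (Fintype.card α) ≤ 2 * (ε * log (Fintype.card α)) := by
    rcases not_and_or.1 hsmall with h | h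
    · nlinarith
    · rcases Nat.le_one_iff_eq_zero_or_eq_one.1 (by omega : Fintype.card α ≤ 1) with h | h <;>
        simp [h]
  have hneg' := negMulLog_nonneg hε0 (by linarith)
  rw [abs_sub_le_iff]
  constructor <;>
    linarith [entropy_nonneg hp, entropy_nonneg hq, entropy_le_log_card hp, entropy_le_log_card hq]

lemma abs_entropy_sub_le_of_sum_eq {P Q : α → ℝ} (hP : ∀ a, 0 ≤ P a) (hQ : ∀ a, 0 ≤ Q a)
    (hPQ : ∑ a, Q a = ∑ a, P a) {ε : ℝ} (hdist : ∑ a, |P a - Q a| ≤ (∑ a, P a) * ε)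
    (hε : ε ≤ 1) :
    |entropy P - entropy Q| ≤ (∑ a, P a) * (2 * (ε * log (Fintype.card α) + binEntropy ε)) := by
  set m := ∑ a, P a
  rcases (sum_nonneg fun a _ => hP a : 0 ≤ m).eq_or_lt with hm | hm
  · have hP0 : P = 0 := funext fun a =>
      (sum_eq_zero_iff_of_nonneg fun a _ => hP a).1 hm.symm a (mem_univ a)
    have hQ0 : Q = 0 := funext fun a =>
      (sum_eq_zero_iff_of_nonneg fun a _ => hQ a).1 (hPQ.trans hm.symm) a (mem_univ a)
    simp [hP0, hQ0, entropy, show m = 0 from hm.symm]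
  replace hm : 0 < m := hm
  have hprob : ∀ R : α → ℝ, (∀ a, 0 ≤ R a) → ∑ a, R a = m → IsProb fun a => R a / m :=
    fun R hR hRm => ⟨fun a => div_nonneg (hR a) hm.le, by rw [← sum_div, hRm, div_self hm.ne']⟩
  have hp := hprob P hP rfl
  have hq := hprob Q hQ hPQ
  have hpq : ∑ a, |P a / m - Q a / m| ≤ ε := by
    simp only [← sub_div, abs_div, abs_of_pos hm, ← sum_div]
    rwa [div_le_iff₀ hm, mul_comm]
  have hunscale : ∀ R : α → ℝ, R = fun a => m * (R a / m) := fun R =>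
    funext fun a => (mul_div_cancel₀ _ hm.ne').symm
  rw [hunscale P, hunscale Q, entropy_const_mul hp.2, entropy_const_mul hq.2,
    add_sub_add_right_eq_sub, ← mul_sub, abs_mul, abs_of_pos hm]
  exact mul_le_mul_of_nonneg_left (abs_entropy_sub_le hp hq hpq hε) hm.le

end entropy

section mixture

variable {Ω Z : Type*} [Fintype Ω] [Fintype Z]

lemma sum_mixture {v : Ω → ℝ} {A : Ω → Z → ℝ} (hA : IsChannel A) :
    ∑ z, ∑ ω, v ω * A ω z = ∑ ω, v ω := by
  rw [sum_comm]
  simp only [← mul_sum, (hA _).2, mul_one]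

lemma abs_entropy_mixture_sub_le {v : Ω → ℝ} (hv : ∀ ω, 0 ≤ v ω) {A B : Ω → Z → ℝ}
    (hA : IsChannel A) (hB : IsChannel B) {ε : ℝ} (hAB : ∀ ω, ∑ z, |A ω z - B ω z| ≤ ε)
    (hε : ε ≤ 1) :
    |entropy (fun z => ∑ ω, v ω * A ω z) - entropy (fun z => ∑ ω, v ω * B ω z)| ≤
      (∑ ω, v ω) * (2 * (ε * log (Fintype.card Z) + binEntropy ε)) := by
  have hdist : ∑ z, |∑ ω, v ω * A ω z - ∑ ω, v ω * B ω z| ≤ (∑ ω, v ω) * ε := by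
    calc _ ≤ ∑ z, ∑ ω, v ω * |A ω z - B ω z| := sum_le_sum fun z _ => by
          rw [← sum_sub_distrib]
          refine (abs_sum_le_sum_abs _ _).trans (le_of_eq (sum_congr rfl fun ω _ => ?_))
          rw [← mul_sub, abs_mul, abs_of_nonneg (hv ω)]
      _ = ∑ ω, v ω * ∑ z, |A ω z - B ω z| := by rw [sum_comm]; simp only [mul_sum]
      _ ≤ ∑ ω, v ω * ε := sum_le_sum fun ω _ => mul_le_mul_of_nonneg_left (hAB ω) (hv ω)
      _ = _ := (sum_mul ..).symm
  have h := abs_entropy_sub_le_of_sum_eq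
    (fun z => sum_nonneg fun ω _ => mul_nonneg (hv ω) ((hA ω).1 z))
    (fun z => sum_nonneg fun ω _ => mul_nonneg (hv ω) ((hB ω).1 z))
    (by rw [sum_mixture hA, sum_mixture hB]) (by rwa [sum_mixture hA]) hε
  rwa [sum_mixture hA] at h

lemma abs_entropy_mixture_prod_sub_le {Y : Type*} [Fintype Y] {w : Ω → Y → ℝ}
    (hw : ∀ ω y, 0 ≤ w ω y) {A B : Ω → Z → ℝ} (hA : IsChannel A) (hB : IsChannel B) {ε : ℝ}
    (hAB : ∀ ω, ∑ z, |A ω z - B ω z| ≤ ε) (hε : ε ≤ 1) :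
    |entropy (fun p : Y × Z => ∑ ω, w ω p.1 * A ω p.2) -
        entropy (fun p : Y × Z => ∑ ω, w ω p.1 * B ω p.2)| ≤
      (∑ ω, ∑ y, w ω y) * (2 * (ε * log (Fintype.card Z) + binEntropy ε)) := by
  have hsplit : ∀ f : Y × Z → ℝ, entropy f = ∑ y, entropy (fun z => f (y, z)) :=
    fun f => Fintype.sum_prod_type _
  calc _ = |∑ y, (entropy (fun z => ∑ ω, w ω y * A ω z) -
              entropy (fun z => ∑ ω, w ω y * B ω z))| := by
        rw [hsplit, hsplit, sum_sub_distrib]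
    _ ≤ ∑ y, |entropy (fun z => ∑ ω, w ω y * A ω z) -
              entropy (fun z => ∑ ω, w ω y * B ω z)| := abs_sum_le_sum_abs _ _
    _ ≤ ∑ y, (∑ ω, w ω y) * (2 * (ε * log (Fintype.card Z) + binEntropy ε)) :=
        sum_le_sum fun y _ => abs_entropy_mixture_sub_le (fun ω => hw ω y) hA hB hAB hε
    _ = _ := by rw [← sum_mul, sum_comm]

end mixture

lemma sum_prod_channel {Ω ι Z : Type*} [Fintype ι] [DecidableEq ι] [Fintype Z]
    {C : ι → Ω → Z → ℝ} (hC : ∀ i, IsChannel (C i)) (ω : Ω) :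
    ∑ z : ι → Z, ∏ i, C i ω (z i) = 1 := by
  rw [← Fintype.prod_sum]
  exact prod_eq_one fun i _ => (hC i ω).2

/-- Joint law of `(t, z)` when `(t, ω)` has weight `μ t ω` and, given `ω`, the letters `z i` are
drawn independently from the channels `C i ω`. -/
noncomputable def outputJoint {T Ω ι Z : Type*} [Fintype Ω] [Fintype ι] (μ : T → Ω → ℝ)
    (C : ι → Ω → Z → ℝ) : T × (ι → Z) → ℝ :=
  fun p => ∑ ω, μ p.1 ω * ∏ i, C i ω (p.2 i)

section outputJoint

variable {T Ω ι Z : Type*} [Fintype Ω] [Fintype ι] [Fintype Z] {μ : T → Ω → ℝ}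
  {C : ι → Ω → Z → ℝ}

lemma outputJoint_nonneg (hμ : ∀ t ω, 0 ≤ μ t ω) (hC : ∀ i, IsChannel (C i))
    (p : T × (ι → Z)) : 0 ≤ outputJoint μ C p :=
  sum_nonneg fun ω _ => mul_nonneg (hμ _ _) (prod_nonneg fun i _ => (hC i ω).1 _)

lemma sum_outputJoint_snd [DecidableEq ι] (hC : ∀ i, IsChannel (C i)) (t : T) :
    ∑ z, outputJoint μ C (t, z) = ∑ ω, μ t ω := by
  simp only [outputJoint]
  rw [sum_comm]
  simp only [← mul_sum, sum_prod_channel hC, mul_one]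

lemma entropy_sum_outputJoint_fst [Fintype T] [DecidableEq ι] :
    entropy (fun z => ∑ t, outputJoint μ C (t, z)) =
      entropy (outputJoint (fun (_ : Unit) ω => ∑ t, μ t ω) C) := by
  rw [entropy, entropy, Fintype.sum_prod_type]
  simp only [outputJoint, sum_mul, Fintype.sum_unique]
  simp_rw [sum_comm (γ := T)]

end outputJoint

section outputJointEntropy

variable {T Ω ι Z : Type*} [Fintype T] [Fintype Ω] [Fintype ι] [DecidableEq ι] [Fintype Z]
  {μ : T → Ω → ℝ}

lemma abs_entropy_outputJoint_sub_le_of_forall_ne (hμ : ∀ t ω, 0 ≤ μ t ω)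
    {C D : ι → Ω → Z → ℝ} (hC : ∀ i, IsChannel (C i)) (hD : ∀ i, IsChannel (D i)) {k : ι}
    (hCD : ∀ i, i ≠ k → C i = D i) {ε : ℝ} (hk : ∀ ω, ∑ z, |C k ω z - D k ω z| ≤ ε)
    (hε : ε ≤ 1) :
    |entropy (outputJoint μ C) - entropy (outputJoint μ D)| ≤
      (∑ t, ∑ ω, μ t ω) * (2 * (ε * log (Fintype.card Z) + binEntropy ε)) := by
  let e : (T × ({j // j ≠ k} → Z)) × Z ≃ T × (ι → Z) :=
    (Equiv.prodAssoc _ _ _).trans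
      ((Equiv.refl T).prodCongr ((Equiv.prodComm _ _).trans (Equiv.funSplitAt k Z).symm))
  let w : Ω → T × ({j // j ≠ k} → Z) → ℝ :=
    fun ω y => μ y.1 ω * ∏ j : {j // j ≠ k}, C j ω (y.2 j)
  have hsplit : ∀ C' : ι → Ω → Z → ℝ, (∀ i, i ≠ k → C' i = C i) →
      outputJoint μ C' ∘ e = fun p => ∑ ω, w ω p.1 * C' k ω p.2 := by
    intro C' hC'
    funext ⟨⟨t, y⟩, z⟩
    refine sum_congr rfl fun ω _ => ?_
    rw [Fintype.prod_eq_mul_prod_subtype_ne _ k]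
    simp only [e, w, Equiv.trans_apply, Equiv.prodAssoc_apply, Equiv.prodCongr_apply, Prod.map,
      Equiv.refl_apply, Equiv.prodComm_apply, Prod.swap, Equiv.funSplitAt_symm_apply, dite_true]
    rw [prod_congr rfl fun j _ => by rw [dif_neg j.2, hC' j j.2]]
    ring
  have hw : ∑ ω, ∑ y, w ω y = ∑ t, ∑ ω, μ t ω := by
    simp only [w, Fintype.sum_prod_type, ← mul_sum,
      sum_prod_channel (C := fun j : {j // j ≠ k} => C j) fun j => hC j, mul_one]
    exact sum_comm
  rw [← entropy_comp_equiv e, ← entropy_comp_equiv e (outputJoint μ D), hsplit C fun _ _ => rfl,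
    hsplit D fun i hi => (hCD i hi).symm, ← hw]
  exact abs_entropy_mixture_prod_sub_le (w := w) (A := C k) (B := D k)
    (fun ω y => mul_nonneg (hμ _ _) (prod_nonneg fun j _ => (hC j ω).1 _)) (hC k) (hD k) hk hε

lemma abs_entropy_outputJoint_sub_le (hμ : ∀ t ω, 0 ≤ μ t ω) {ε : ℝ} (hε : ε ≤ 1)
    (s : Finset ι) {C D : ι → Ω → Z → ℝ} (hC : ∀ i, IsChannel (C i))
    (hD : ∀ i, IsChannel (D i)) (hCD : ∀ i ∉ s, C i = D i)
    (hclose : ∀ i ∈ s, ∀ ω, ∑ z, |C i ω z - D i ω z| ≤ ε) :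
    |entropy (outputJoint μ C) - entropy (outputJoint μ D)| ≤
      #s * ((∑ t, ∑ ω, μ t ω) * (2 * (ε * log (Fintype.card Z) + binEntropy ε))) := by
  induction s using Finset.induction_on generalizing C with
  | empty =>
    obtain rfl : C = D := funext fun i => hCD i (notMem_empty i)
    simp
  | insert k s hks ih =>
    set C' := Function.update C k (D k)
    have hC' : ∀ i, IsChannel (C' i) := fun i => by
      by_cases hi : i = k
      · subst hi; simpa [C'] using hD i
      · simpa [C', hi] using hC i
    have hstep := abs_entropy_outputJoint_sub_le_of_forall_ne hμ hC hC' (k := k)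
      (fun i hi => (Function.update_of_ne hi _ _).symm)
      (by simpa [C'] using hclose k (mem_insert_self k s)) hε
    have hrest := ih hC'
      (fun i hi => by
        by_cases hik : i = k
        · subst hik; simp [C']
        · simpa [C', hik] using hCD i (by simp [hik, hi]))
      (fun i hi ω => by
        have hik : i ≠ k := fun h => hks (h ▸ hi)
        simpa [C', hik] using hclose i (mem_insert_of_mem hi) ω)
    rw [card_insert_of_notMem hks]
    push_cast
    linarith [abs_sub_le (entropy (outputJoint μ C)) (entropy (outputJoint μ C'))
      (entropy (outputJoint μ D))]

end outputJointEntropy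

lemma mul_log_div_mul_eq {P a b : ℝ} (hP : 0 ≤ P) (ha : P ≤ a) (hb : P ≤ b) :
    P * log (P / (a * b)) = -negMulLog P - P * log a - P * log b := by
  rcases hP.eq_or_lt with rfl | hP
  · simp
  rw [log_div hP.ne' (mul_pos (by linarith) (by linarith)).ne', log_mul (by linarith) (by linarith),
    negMulLog]
  ring

lemma mutInf_eq_entropy {U Y : Type*} [Fintype U] [Fintype Y] {P : U × Y → ℝ}
    (hP : ∀ p, 0 ≤ P p) :
    mutInf P = (entropy (fun u => ∑ y, P (u, y)) + entropy (fun y => ∑ u, P (u, y))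
      - entropy P) / log 2 := by
  have hterm : ∀ u y, P (u, y) * logb 2 (P (u, y) / ((∑ y', P (u, y')) * ∑ u', P (u', y))) =
      (-negMulLog (P (u, y)) - P (u, y) * log (∑ y', P (u, y'))
        - P (u, y) * log (∑ u', P (u', y))) / log 2 := fun u y => by
    rw [logb, mul_div_assoc', mul_log_div_mul_eq (hP _)
      (single_le_sum (fun y' _ => hP (u, y')) (mem_univ y))
      (single_le_sum (fun u' _ => hP (u', y)) (mem_univ u))]
  simp only [mutInf, hterm, ← sum_div, sum_sub_distrib, sum_neg_distrib]
  rw [sum_comm (f := fun u y => P (u, y) * log (∑ u', P (u', y)))]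
  simp only [← sum_mul, entropy, negMulLog, Fintype.sum_prod_type, neg_mul, sum_neg_distrib]
  ring

lemma H2_eq_binEntropy_div (ε : ℝ) : H2 ε = binEntropy ε / log 2 := by
  rw [binEntropy_eq_negMulLog_add_negMulLog_one_sub]
  simp only [H2, negMulLog, logb]
  ring

lemma H2_nonneg {ε : ℝ} (h0 : 0 ≤ ε) (h1 : ε ≤ 1) : 0 ≤ H2 ε := by
  rw [H2_eq_binEntropy_div]
  exact div_nonneg (binEntropy_nonneg h0 h1) (log_pos one_lt_two).le

lemma abs_mutInf_outputJoint_sub_le {T Ω ι Z : Type*} [Fintype T] [Fintype Ω] [Fintype ι]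
    [DecidableEq ι] [Fintype Z] {μ : T → Ω → ℝ} (hμ : ∀ t ω, 0 ≤ μ t ω) {ε : ℝ} (hε : ε ≤ 1)
    {C D : ι → Ω → Z → ℝ} (hC : ∀ i, IsChannel (C i)) (hD : ∀ i, IsChannel (D i))
    (hclose : ∀ i ω, ∑ z, |C i ω z - D i ω z| ≤ ε) :
    |mutInf (outputJoint μ C) - mutInf (outputJoint μ D)| ≤
      Fintype.card ι * (∑ t, ∑ ω, μ t ω) * (4 * ε * logb 2 (Fintype.card Z) + 4 * H2 ε) := by
  have hjoint := abs_entropy_outputJoint_sub_le hμ hε univ hC hD (by simp) fun i _ => hclose i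
  have hmarg := abs_entropy_outputJoint_sub_le (μ := fun (_ : Unit) ω => ∑ t, μ t ω)
    (fun _ ω => sum_nonneg fun t _ => hμ t ω) hε univ hC hD (by simp) fun i _ => hclose i
  rw [Fintype.sum_unique, sum_comm] at hmarg
  rw [card_univ] at hjoint hmarg
  rw [mutInf_eq_entropy (outputJoint_nonneg hμ hC), mutInf_eq_entropy (outputJoint_nonneg hμ hD)]
  simp only [sum_outputJoint_snd hC, sum_outputJoint_snd hD, entropy_sum_outputJoint_fst]
  have hlog2 : 0 < log 2 := log_pos one_lt_two
  rw [← sub_div, abs_div, abs_of_pos hlog2, div_le_iff₀ hlog2, H2_eq_binEntropy_div, logb]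
  have htri : ∀ a b b' c c' : ℝ, |a + b - c - (a + b' - c')| ≤ |b - b'| + |c - c'| :=
    fun a b b' c c' => by
      rw [show a + b - c - (a + b' - c') = b - b' - (c - c') by ring]
      exact abs_sub _ _
  calc _ ≤ _ := htri _ _ _ _ _
    _ ≤ _ := add_le_add hmarg hjoint
    _ = _ := by field_simp; ring

lemma exists_sum_abs_sub_le_of_Davc_le {X Y S₁ S₂ : Type*} [Finite X] [Fintype Y] [Finite S₁]
    [Nonempty S₁] [Finite S₂] {W₁ : S₁ → X → Y → ℝ} {W₂ : S₂ → X → Y → ℝ} {ε : ℝ}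
    (h : Davc W₁ W₂ ≤ ε) (s₂ : S₂) : ∃ s₁, ∀ x, ∑ y, |W₁ s₁ x y - W₂ s₂ x y| ≤ ε := by
  obtain ⟨s₁, hs₁⟩ := exists_eq_ciInf_of_finite (f := fun s₁ => dChan (W₁ s₁) (W₂ s₂))
  refine ⟨s₁, fun x => ?_⟩
  calc ∑ y, |W₁ s₁ x y - W₂ s₂ x y| ≤ dChan (W₁ s₁) (W₂ s₂) :=
        le_ciSup (Finite.bddAbove_range fun x => ∑ y, |W₁ s₁ x y - W₂ s₂ x y|) x
    _ = ⨅ s₁, dChan (W₁ s₁) (W₂ s₂) := hs₁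
    _ ≤ ⨆ s₂, ⨅ s₁, dChan (W₁ s₁) (W₂ s₂) :=
        le_ciSup (Finite.bddAbove_range fun s₂ => ⨅ s₁, dChan (W₁ s₁) (W₂ s₂)) s₂
    _ ≤ ε := (le_max_left _ _).trans h

lemma jointAVC_eq_outputJoint {X Z S J : Type*} [Fintype X] [Fintype J] (n : ℕ)
    (V : S → X → Z → ℝ) (sn : Fin n → S) (E : J → (Fin n → X) → ℝ) :
    jointAVC n V sn E =
      outputJoint (fun j xn => (Fintype.card J : ℝ)⁻¹ * E j xn) fun i xn => V (sn i) (xn i) := by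
  funext p
  simp only [jointAVC, outputJoint, mul_sum]
  exact sum_congr rfl fun xn _ => by ring

lemma one_div_mul_le_add_of_abs_sub_le {a b m K : ℝ} {n : ℕ} (h : |a - b| ≤ n * m * K)
    (hm : m ≤ 1) (hK : 0 ≤ K) : 1 / (n : ℝ) * a ≤ 1 / (n : ℝ) * b + K := by
  have hmK : n * m * K ≤ n * K := by
    rw [mul_right_comm]
    exact mul_le_of_le_one_right (by positivity) hm
  calc 1 / (n : ℝ) * a ≤ 1 / (n : ℝ) * (b + n * K) := by gcongr; linarith [(abs_le.1 h).2]
    _ = 1 / (n : ℝ) * b + (n / n) * K := by ring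
    _ ≤ 1 / (n : ℝ) * b + K := by gcongr; exact mul_le_of_le_one_left hK (div_self_le_one _)

theorem weak_secrecy_robustness_general {X Z S S' : Type*}
    [Fintype X] [Fintype Z] [Fintype S] [Fintype S'] [Nonempty S] [Nonempty S']
    {ε : ℝ} (hε : ε ∈ Set.Ioo (0 : ℝ) 1)
    (V : S → X → Z → ℝ) (V' : S' → X → Z → ℝ)
    (hV : ∀ s, IsChannel (V s)) (hV' : ∀ s, IsChannel (V' s))
    (hD : Davc V V' ≤ ε)
    (n : ℕ) {J : Type*} [Fintype J]
    (E : J → (Fin n → X) → ℝ)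
    (hE : ∀ j, (∀ xn, 0 ≤ E j xn) ∧ ∑ xn : Fin n → X, E j xn = 1)
    (δn : ℝ)
    (hδ : (⨆ sn : Fin n → S, (1 / (n : ℝ)) * mutInf (jointAVC n V sn E)) = δn) :
    (⨆ sn : Fin n → S', (1 / (n : ℝ)) * mutInf (jointAVC n V' sn E)) ≤
      δn + 4 * ε * Real.logb 2 (Fintype.card Z) + 4 * H2 ε := by
  obtain ⟨hε0, hε1⟩ := hε
  have hK : 0 ≤ 4 * ε * logb 2 (Fintype.card Z) + 4 * H2 ε := by
    have := H2_nonneg hε0.le hε1.le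
    have : 0 ≤ logb 2 (Fintype.card Z) := div_nonneg (log_natCast_nonneg _) (log_pos one_lt_two).le
    positivity
  have hμ : ∑ j, ∑ xn, (Fintype.card J : ℝ)⁻¹ * E j xn ≤ 1 := by
    simp only [← mul_sum, (hE _).2, mul_one, sum_const, card_univ, nsmul_eq_mul]
    exact mul_inv_le_one
  choose f hf using exists_sum_abs_sub_le_of_Davc_le hD
  subst hδ
  refine ciSup_le fun s'n => ?_
  have hI := abs_mutInf_outputJoint_sub_le (μ := fun j xn => (Fintype.card J : ℝ)⁻¹ * E j xn)
    (fun j xn => mul_nonneg (inv_nonneg.2 (Nat.cast_nonneg _)) ((hE j).1 xn)) hε1.le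
    (C := fun i xn => V' (s'n i) (xn i)) (D := fun i xn => V (f (s'n i)) (xn i))
    (fun i xn => hV' (s'n i) (xn i)) (fun i xn => hV (f (s'n i)) (xn i))
    (fun i xn => by simpa only [abs_sub_comm] using hf (s'n i) (xn i))
  rw [← jointAVC_eq_outputJoint, ← jointAVC_eq_outputJoint, Fintype.card_fin] at hI
  have hsup := le_ciSup (Finite.bddAbove_range fun sn : Fin n → S =>
    (1 / (n : ℝ)) * mutInf (jointAVC n V sn E)) fun i => f (s'n i)
  linarith [one_div_mul_le_add_of_abs_sub_le hI hμ hK]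

/-- robustness of the weak-secrecy information leakage of an unassisted code
under perturbation of the eavesdropper AVC. -/
theorem weak_secrecy_robustness {X Z S S' : Type*}
    [Fintype X] [Fintype Z] [Fintype S] [Fintype S'] [Nonempty S] [Nonempty S']
    {ε : ℝ} (hε : ε ∈ Set.Ioo (0 : ℝ) 1)
    (V : S → X → Z → ℝ) (V' : S' → X → Z → ℝ)
    (hV : ∀ s, IsChannel (V s)) (hV' : ∀ s, IsChannel (V' s))
    (hD : Davc V V' ≤ ε)
    (n : ℕ) {J : Type*} [Fintype J] [Nonempty J]
    (E : J → (Fin n → X) → ℝ)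
    (hE : ∀ j, (∀ xn, 0 ≤ E j xn) ∧ ∑ xn : Fin n → X, E j xn = 1)
    (δn : ℝ)
    (hδ : (⨆ sn : Fin n → S, (1 / (n : ℝ)) * mutInf (jointAVC n V sn E)) = δn) :
    (⨆ sn : Fin n → S', (1 / (n : ℝ)) * mutInf (jointAVC n V' sn E)) ≤
      δn + 4 * ε * Real.logb 2 (Fintype.card Z) + 4 * H2 ε :=
  weak_secrecy_robustness_general hε V V' hV hV' hD n E hE δn hδ
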